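/- arXiv:1106.4098 — 3 statements merged into one kernel-verified Lean document; each statement's English description precedes it below -/
import Mathlib

section
/- Downward simulation with new events implies trace inclusion modulo hiding: with machines M₀, M₁ as before, a partial renaming f : Σ₁ → Option Σ₀ (where f a = none means a is a new event refining skip), suppose (i) initial states are linked by J; (ii) if J(v,w), H a w, BA₁ a w w', and f a = some b, then G b v and ∃ v', BA₀ b v v' ∧ J(v',w'); (iii) if J(v,w), H a w, BA₁ a w w', and f a = none, then J(v,w'). Then for every finite trace tr of M₁, the trace obtained by mapping f over tr and dropping the none entries (i.e. hiding the new events) is a trace of M₀. -/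
/-- A finite execution of a machine with guards `Gd` and before-after relations
`BA` from a state `s` along a list of events. -/
def Exec {S E : Type*} (Gd : E → S → Prop) (BA : E → S → S → Prop) :
    S → List E → Prop
  | _, [] => True
  | s, a :: tr => Gd a s ∧ ∃ s', BA a s s' ∧ Exec Gd BA s' tr

/-- A finite trace of a machine: a list of events executable from some initial state. -/
def IsTrace {S E : Type*} (Init : Set S) (Gd : E → S → Prop)
    (BA : E → S → S → Prop) (tr : List E) : Prop :=
  ∃ s ∈ Init, Exec Gd BA s tr

/-- Downward simulation with new events implies trace inclusion
modulo hiding: with a partial renaming `f : E₁ → Option E₀` (new events map to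
`none` and refine skip), every finite trace of `M₁`, mapped by `f` with the new
events dropped (`List.filterMap f`), is a trace of `M₀`. -/
theorem stmt_10 {V W E₀ E₁ : Type*}
    (Init₀ : Set V) (G : E₀ → V → Prop) (BA₀ : E₀ → V → V → Prop)
    (Init₁ : Set W) (H : E₁ → W → Prop) (BA₁ : E₁ → W → W → Prop)
    (f : E₁ → Option E₀) (J : V → W → Prop)
    (hinit : ∀ w ∈ Init₁, ∃ v ∈ Init₀, J v w)
    (hsim : ∀ v w a w' b, J v w → H a w → BA₁ a w w' → f a = some b →
      G b v ∧ ∃ v', BA₀ b v v' ∧ J v' w')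
    (hskip : ∀ v w a w', J v w → H a w → BA₁ a w w' → f a = none → J v w') :
    ∀ tr : List E₁, IsTrace Init₁ H BA₁ tr →
      IsTrace Init₀ G BA₀ (tr.filterMap f) := by
  have key : ∀ (tr : List E₁) (v w), J v w → Exec H BA₁ w tr →
      Exec G BA₀ v (tr.filterMap f) := by
    intro tr
    induction tr with
    | nil => intro v w _ _; trivial
    | cons a tr ih =>
      intro v w hJ hex
      obtain ⟨hH, w', hBA, hex'⟩ := hex
      cases hf : f a with
      | none =>
        simp only [List.filterMap_cons, hf]
        exact ih v w' (hskip v w a w' hJ hH hBA hf) hex'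
      | some b =>
        obtain ⟨hG, v', hBA0, hJ'⟩ := hsim v w a w' b hJ hH hBA hf
        simp only [List.filterMap_cons, hf]
        exact ⟨hG, v', hBA0, ih v' w' hJ' hex'⟩
  rintro tr ⟨w, hw, hex⟩
  obtain ⟨v, hv, hJ⟩ := hinit w hw
  exact ⟨v, hv, key tr v w hJ hex⟩
end

section
/- Downward simulation with new events implies infinite-trace inclusion modulo hiding: under the same simulation hypotheses (i)-(iii) as the finite-trace version, for every infinite execution u : ℕ → Σ₁ of M₁ in which infinitely many events a satisfy f a ≠ none (i.e. the old events occur infinitely often), the infinite sequence of old events (filterMap of f over u) is an infinite trace of M₀. -/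
/-- Downward simulation with new events implies infinite-trace
inclusion modulo hiding: for every infinite execution `u` of the concrete
machine `M₁` in which old events (those with `f (u n) ≠ none`) occur infinitely
often, there is an infinite execution of the abstract machine `M₀` along the
subsequence of old events (enumerated by a strictly monotone `φ` with range
`{n | f (u n) ≠ none}`), on the renamed events. -/
theorem stmt_11 {V W E₀ E₁ : Type*}
    (Init₀ : Set V) (G : E₀ → V → Prop) (BA₀ : E₀ → V → V → Prop)
    (Init₁ : Set W) (H : E₁ → W → Prop) (BA₁ : E₁ → W → W → Prop)
    (f : E₁ → Option E₀) (J : V → W → Prop)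
    (hinit : ∀ w ∈ Init₁, ∃ v ∈ Init₀, J v w)
    (hsim : ∀ v w a w' b, J v w → H a w → BA₁ a w w' → f a = some b →
      G b v ∧ ∃ v', BA₀ b v v' ∧ J v' w')
    (hskip : ∀ v w a w', J v w → H a w → BA₁ a w w' → f a = none → J v w')
    (u : ℕ → E₁) (w : ℕ → W)
    (hw0 : w 0 ∈ Init₁)
    (hexec : ∀ n, H (u n) (w n) ∧ BA₁ (u n) (w n) (w (n + 1)))
    (hinf : {n | f (u n) ≠ none}.Infinite) :
    ∃ (φ : ℕ → ℕ) (v : ℕ → V),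
      StrictMono φ ∧ Set.range φ = {n | f (u n) ≠ none} ∧
      v 0 ∈ Init₀ ∧
      ∀ k, ∃ b, f (u (φ k)) = some b ∧ G b (v k) ∧ BA₀ b (v k) (v (k + 1)) := by
  classical
  -- a one-step construction of abstract states
  have step : ∀ n (v : V), J v (w n) → ∃ v', J v' (w (n+1)) ∧
      (f (u n) = none → v' = v) ∧
      ∀ b, f (u n) = some b → G b v ∧ BA₀ b v v' := by
    intro n v hJ
    rcases hh : f (u n) with _ | b
    · exact ⟨v, hskip _ _ _ _ hJ (hexec n).1 (hexec n).2 hh, fun _ => rfl,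
        fun b hb => by simp [hh] at hb⟩
    · obtain ⟨hG, v', hBA, hJ'⟩ := hsim v (w n) (u n) (w (n+1)) b hJ (hexec n).1 (hexec n).2 hh
      refine ⟨v', hJ', by simp [hh], fun b' hb' => ?_⟩
      injection hb' with e
      subst e; exact ⟨hG, hBA⟩
  obtain ⟨v0, hv0, hJ0⟩ := hinit (w 0) hw0
  -- the full abstract state sequence, by recursion
  let vs : ∀ n : ℕ, {v : V // J v (w n)} := fun n =>
    Nat.rec ⟨v0, hJ0⟩ (fun n p => ⟨(step n p.1 p.2).choose, (step n p.1 p.2).choose_spec.1⟩) n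
  let vseq : ℕ → V := fun n => (vs n).1
  have hsucc : ∀ n, (f (u n) = none → vseq (n+1) = vseq n) ∧
      ∀ b, f (u n) = some b → G b (vseq n) ∧ BA₀ b (vseq n) (vseq (n+1)) := by
    intro n
    exact ⟨(step n (vs n).1 (vs n).2).choose_spec.2.1,
      (step n (vs n).1 (vs n).2).choose_spec.2.2⟩
  have hconst : ∀ a b : ℕ, a ≤ b → (∀ m, a ≤ m → m < b → f (u m) = none) →
      vseq b = vseq a := by
    intro a b hab
    induction b, hab using Nat.le_induction with
    | base => intro _; rfl
    | succ n hn ih =>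
      intro hnone
      rw [(hsucc n).1 (hnone n hn (Nat.lt_succ_self n))]
      exact ih fun m hm hm' => hnone m hm (Nat.lt_succ_of_lt hm')
  have hinf' : (setOf fun n => f (u n) ≠ none).Infinite := hinf
  have hmono : StrictMono (Nat.nth fun n => f (u n) ≠ none) := Nat.nth_strictMono hinf'
  have hrange : Set.range (Nat.nth fun n => f (u n) ≠ none) = {n | f (u n) ≠ none} :=
    Nat.range_nth_of_infinite hinf'
  have hmem : ∀ k, f (u (Nat.nth (fun n => f (u n) ≠ none) k)) ≠ none :=
    fun k => Nat.nth_mem_of_infinite hinf' k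
  have hgap : ∀ m, f (u m) ≠ none → ∃ j, Nat.nth (fun n => f (u n) ≠ none) j = m := by
    intro m hm
    have : m ∈ Set.range (Nat.nth fun n => f (u n) ≠ none) := by rw [hrange]; exact hm
    exact this
  refine ⟨Nat.nth fun n => f (u n) ≠ none,
    fun k => vseq (Nat.nth (fun n => f (u n) ≠ none) k), hmono, hrange, ?_, ?_⟩
  · show vseq (Nat.nth (fun n => f (u n) ≠ none) 0) ∈ Init₀
    have h0 : vseq (Nat.nth (fun n => f (u n) ≠ none) 0) = vseq 0 := by
      apply hconst 0 _ (Nat.zero_le _)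
      intro m _ hm
      by_contra hne
      obtain ⟨j, hj⟩ := hgap m hne
      have := hmono.monotone (Nat.zero_le j)
      omega
    rw [h0]; exact hv0
  · intro k
    rcases hh : f (u (Nat.nth (fun n => f (u n) ≠ none) k)) with _ | b
    · exact absurd hh (hmem k)
    have hstep := (hsucc (Nat.nth (fun n => f (u n) ≠ none) k)).2 b hh
    have hle : Nat.nth (fun n => f (u n) ≠ none) k + 1 ≤
        Nat.nth (fun n => f (u n) ≠ none) (k+1) := hmono (Nat.lt_succ_self k)
    have hc : vseq (Nat.nth (fun n => f (u n) ≠ none) (k+1)) =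
        vseq (Nat.nth (fun n => f (u n) ≠ none) k + 1) := by
      apply hconst _ _ hle
      intro m hm hm'
      by_contra hne
      obtain ⟨j, hj⟩ := hgap m hne
      have h1 : k < j := hmono.lt_iff_lt.mp (by omega)
      have h2 : j < k + 1 := hmono.lt_iff_lt.mp (by omega)
      omega
    exact ⟨b, rfl, hstep.1, by rw [show (fun k => vseq (Nat.nth (fun n => f (u n) ≠ none) k)) (k+1)
      = vseq (Nat.nth (fun n => f (u n) ≠ none) (k+1)) from rfl, hc]; exact hstep.2⟩
end

section
/- Accumulation of CA along a refinement step: let u : ℕ → Σ₁ be an infinite trace, f : Σ₁ → Σ₀ a (total) renaming, and C₀, R₀ ⊆ Σ₀, C₁, R₁ ⊆ Σ₁ with R₁ = f⁻¹(C₀ ∪ R₀). If (a) the renamed trace f ∘ u satisfies CA(C₀, R₀) and (b) u satisfies CA(C₁, R₁), then u satisfies CA(f⁻¹(C₀) ∪ C₁, f⁻¹(R₀)). -/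
/-- Accumulation of CA along a refinement step: for an infinite
trace `u : ℕ → E₁`, a total renaming `f : E₁ → E₀`, and sets with
`R₁ = f⁻¹(C₀ ∪ R₀)`, if the renamed trace `f ∘ u` satisfies CA(C₀, R₀) and `u`
satisfies CA(C₁, R₁), then `u` satisfies CA(f⁻¹(C₀) ∪ C₁, f⁻¹(R₀)). -/
theorem stmt_17 {E₀ E₁ : Type*} (u : ℕ → E₁) (f : E₁ → E₀)
    (C₀ R₀ : Set E₀) (C₁ R₁ : Set E₁)
    (hR₁ : R₁ = f ⁻¹' (C₀ ∪ R₀))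
    (ha : {n | (f ∘ u) n ∈ C₀}.Infinite → {n | (f ∘ u) n ∈ R₀}.Infinite)
    (hb : {n | u n ∈ C₁}.Infinite → {n | u n ∈ R₁}.Infinite) :
    {n | u n ∈ f ⁻¹' C₀ ∪ C₁}.Infinite → {n | u n ∈ f ⁻¹' R₀}.Infinite := by
  intro h
  have hsplit : {n | u n ∈ f ⁻¹' C₀ ∪ C₁} =
      {n | (f ∘ u) n ∈ C₀} ∪ {n | u n ∈ C₁} := by
    ext n; simp [Set.mem_union]
  rw [hsplit] at h
  have key : {n | (f ∘ u) n ∈ C₀}.Infinite → {n | u n ∈ f ⁻¹' R₀}.Infinite := fun hc =>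
    ha hc
  rcases Set.infinite_union.mp h with hc | hc
  · exact key hc
  · have := hb hc
    rw [hR₁] at this
    have : {n | (f ∘ u) n ∈ C₀} ∪ {n | (f ∘ u) n ∈ R₀} |>.Infinite := by
      refine this.mono ?_
      intro n hn
      simpa [Set.mem_union] using hn
    rcases Set.infinite_union.mp this with h1 | h1
    · exact key h1
    · exact h1
end
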